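/- arXiv:1011.6426 — 2 statements merged into one kernel-verified Lean document; each statement's English description precedes it below -/
import Mathlib

section
/- The generating function of energy over all highest binary paths equals a difference of q-binomial coefficients: for integers L ≥ 2M ≥ 0, the sum over all sequences b ∈ {1,2}^L with exactly M entries 2 such that every prefix contains at least as many 1's as 2's, of q^{E(b)} with E(b) = Σ_{j=1}^{L-1} j·[b_j < b_{j+1}], equals [L choose M]_q − [L choose M−1]_q. -/
/-!
Write `Z(n, M)` for the energy generating function of highest paths of length `n` with `M` twos.
Appending a `1` to a path changes neither its energy nor whether it is highest, while appending a
`2` to a path of length `n + 1` adds `n + 1` to the energy exactly when the path ends in `1`.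
Sorting paths of length `n + 2` by their last two letters therefore gives, for `2M ≤ n`,
`Z(n+2, M+1) = Z(n+1, M+1) + Z(n+1, M) - Z(n, M) + q^(n+1) Z(n, M)`.
With `(k)! := qPoch k`, the difference of Gaussian binomials is
`(L)! (q^M - q^(L-M+1)) / ((M)! (L-M+1)!)`, in which form the same recurrence is a routine
rational-function identity; both sides are `1` for `M = 0` and vanish for `L = 2M - 1`.
-/

open Finset

noncomputable def q : RatFunc ℚ := RatFunc.X

noncomputable def qInt (n : ℕ) : RatFunc ℚ := ∑ i ∈ Finset.range n, q ^ i

noncomputable def qPoch (n : ℕ) : RatFunc ℚ := ∏ i ∈ Finset.range n, (1 - q ^ (i + 1))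

noncomputable def qb (n m : ℕ) : RatFunc ℚ := qPoch n / (qPoch m * qPoch (n - m))

/-- Energy of a path `b : Fin L → Bool` (`false` = 1, `true` = 2). -/
def En {L : ℕ} (b : Fin L → Bool) : ℕ :=
  ∑ i : Fin L, if h : (i : ℕ) + 1 < L then
    (if b i < b ⟨(i : ℕ) + 1, h⟩ then (i : ℕ) + 1 else 0) else 0

/-- A path is highest if every prefix has at least as many 1's as 2's. -/
def Highest {L : ℕ} (b : Fin L → Bool) : Bool :=
  decide <|
  ∀ i : Fin L, (Finset.univ.filter (fun j : Fin L => j ≤ i ∧ b j = true)).card ≤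
    (Finset.univ.filter (fun j : Fin L => j ≤ i ∧ b j = false)).card

lemma one_sub_q_pow_succ_ne_zero (k : ℕ) : (1 : RatFunc ℚ) - q ^ (k + 1) ≠ 0 := by
  intro h
  have hX : (Polynomial.X ^ (k + 1) : Polynomial ℚ) = 1 :=
    RatFunc.algebraMap_injective ℚ (by simpa [q] using (sub_eq_zero.1 h).symm)
  simpa using congrArg Polynomial.natDegree hX

lemma qPoch_zero : qPoch 0 = 1 := prod_range_zero _

lemma qPoch_succ (n : ℕ) : qPoch (n + 1) = qPoch n * (1 - q ^ (n + 1)) :=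
  prod_range_succ _ n

lemma qPoch_ne_zero (n : ℕ) : qPoch n ≠ 0 :=
  prod_ne_zero_iff.2 fun i _ => one_sub_q_pow_succ_ne_zero i

noncomputable def qBallot (L M : ℕ) : RatFunc ℚ := qb L M - (if M = 0 then 0 else qb L (M - 1))

lemma qBallot_zero_right (L : ℕ) : qBallot L 0 = 1 := by
  simp [qBallot, qb, qPoch_zero, qPoch_ne_zero]

lemma qBallot_add_left (m c : ℕ) :
    qBallot (m + c) m = qPoch (m + c) * (q ^ m - q ^ (c + 1)) / (qPoch m * qPoch (c + 1)) := by
  have hc := qPoch_ne_zero c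
  have hc' := one_sub_q_pow_succ_ne_zero c
  rcases m with _ | j
  · rw [qBallot_zero_right, zero_add, qPoch_succ, qPoch_zero, pow_zero]
    field_simp
  · have hj := qPoch_ne_zero j
    have hj' := one_sub_q_pow_succ_ne_zero j
    simp only [qBallot, qb, Nat.add_one_ne_zero, if_false, Nat.add_sub_cancel,
      Nat.add_sub_cancel_left, show j + 1 + c - j = c + 1 by omega, qPoch_succ]
    field_simp
    ring

lemma qBallot_two_mul_add_one (m : ℕ) : qBallot (2 * m + 1) (m + 1) = 0 := by
  rw [show 2 * m + 1 = m + 1 + m by ring, qBallot_add_left, sub_self, mul_zero, zero_div]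

lemma qBallot_recurrence (k c : ℕ) :
    qBallot (k + c + 2) (k + 1) =
      qBallot (k + c + 1) (k + 1) + qBallot (k + c + 1) k - qBallot (k + c) k
        + q ^ (k + c + 1) * qBallot (k + c) k := by
  have e2 : qPoch (k + c + 2) = qPoch (k + c) * (1 - q ^ (k + c + 1)) * (1 - q ^ (k + c + 2)) := by
    rw [qPoch_succ (k + c + 1), qPoch_succ]
  have e1 : qPoch (k + c + 1) = qPoch (k + c) * (1 - q ^ (k + c + 1)) := qPoch_succ _
  rw [show k + c + 2 = k + 1 + (c + 1) by ring, qBallot_add_left,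
    show k + c + 1 = k + 1 + c by ring, qBallot_add_left,
    show k + 1 + c = k + (c + 1) by ring, qBallot_add_left, qBallot_add_left,
    show k + 1 + (c + 1) = k + c + 2 by ring, show k + (c + 1) = k + c + 1 by ring, e1, e2,
    qPoch_succ k, qPoch_succ (c + 1)]
  have := qPoch_ne_zero k
  have := qPoch_ne_zero (c + 1)
  have := one_sub_q_pow_succ_ne_zero k
  have := one_sub_q_pow_succ_ne_zero (c + 1)
  field_simp
  ring

section Paths

variable {n : ℕ}

lemma En_eq_sum_castSucc_succ (b : Fin (n + 1) → Bool) :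
    En b = ∑ j : Fin n, if b j.castSucc < b j.succ then (j : ℕ) + 1 else 0 := by
  rw [En, Fin.sum_univ_castSucc, dif_neg (by simp), add_zero]
  exact sum_congr rfl fun j _ => dif_pos (by simp)

lemma En_snoc (b : Fin (n + 1) → Bool) (v : Bool) :
    En (Fin.snoc b v : Fin (n + 2) → Bool) = En b + if b (Fin.last n) < v then n + 1 else 0 := by
  rw [En_eq_sum_castSucc_succ, En_eq_sum_castSucc_succ, Fin.sum_univ_castSucc]
  simp [Fin.succ_castSucc, -Fin.castSucc_succ]

lemma En_snoc_false (b : Fin n → Bool) : En (Fin.snoc b false : Fin (n + 1) → Bool) = En b := by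
  rcases n with _ | n
  · simp [En]
  · simp [En_snoc]

lemma card_snoc_eq (b : Fin n → Bool) (v t : Bool) :
    #{i | (Fin.snoc b v : Fin (n + 1) → Bool) i = t} =
      #{i | b i = t} + if v = t then 1 else 0 := by
  rw [card_filter, card_filter, Fin.sum_univ_castSucc]
  simp

lemma card_le_castSucc_snoc_eq (b : Fin n → Bool) (v t : Bool) (i : Fin n) :
    #{j | j ≤ i.castSucc ∧ (Fin.snoc b v : Fin (n + 1) → Bool) j = t} =
      #{j | j ≤ i ∧ b j = t} := by
  rw [card_filter, card_filter, Fin.sum_univ_castSucc,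
    if_neg (by simp [(Fin.castSucc_lt_last i).not_ge]), add_zero]
  simp

lemma card_le_last_eq (b : Fin (n + 1) → Bool) (t : Bool) :
    #{j | j ≤ Fin.last n ∧ b j = t} = #{j | b j = t} := by
  simp [Fin.le_last]

lemma card_true_add_card_false (b : Fin n → Bool) :
    #{i | b i = true} + #{i | b i = false} = n := by
  simpa using card_filter_add_card_filter_not (s := univ) (fun i => b i = true)

lemma highest_iff (b : Fin n → Bool) :
    Highest b ↔ ∀ i, #{j | j ≤ i ∧ b j = true} ≤ #{j | j ≤ i ∧ b j = false} :=
  decide_eq_true_iff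

lemma two_mul_card_le_of_highest {b : Fin n → Bool} (hb : Highest b) :
    2 * #{i | b i = true} ≤ n := by
  rcases n with _ | n
  · simp
  · have h := (highest_iff b).1 hb (Fin.last n)
    rw [card_le_last_eq, card_le_last_eq] at h
    have := card_true_add_card_false b
    omega

lemma highest_snoc_iff (b : Fin n → Bool) (v : Bool) :
    Highest (Fin.snoc b v : Fin (n + 1) → Bool) ↔
      Highest b ∧ 2 * #{i | (Fin.snoc b v : Fin (n + 1) → Bool) i = true} ≤ n + 1 := by
  rw [highest_iff, highest_iff, Fin.forall_fin_succ']
  simp only [card_le_castSucc_snoc_eq, card_le_last_eq]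
  have := card_true_add_card_false (Fin.snoc b v : Fin (n + 1) → Bool)
  refine and_congr_right fun _ => ?_
  omega

end Paths

noncomputable def weight {n : ℕ} (M : ℕ) (b : Fin n → Bool) : RatFunc ℚ :=
  if #{i | b i = true} = M ∧ Highest b then q ^ En b else 0

noncomputable def highestGF (L M : ℕ) : RatFunc ℚ := ∑ b : Fin L → Bool, weight M b

section Weight

variable {n : ℕ}

lemma sum_pi_fin_succ_bool {β : Type*} [AddCommMonoid β] (f : (Fin (n + 1) → Bool) → β) :
    ∑ c, f c =
      ∑ b : Fin n → Bool, f (Fin.snoc b true) + ∑ b : Fin n → Bool, f (Fin.snoc b false) := by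
  rw [← (Fin.snocEquiv fun _ => Bool).sum_comp, Fintype.sum_prod_type,
    Fintype.sum_bool]
  rfl

lemma weight_snoc_false (M : ℕ) (b : Fin n → Bool) :
    weight M (Fin.snoc b false : Fin (n + 1) → Bool) = weight M b := by
  unfold weight
  refine if_congr ?_ (by rw [En_snoc_false]) rfl
  rw [highest_snoc_iff, card_snoc_eq]
  simp only [Bool.false_eq_true, if_false, add_zero]
  exact and_congr_right fun _ => ⟨And.left, fun hb => ⟨hb, by
    have := two_mul_card_le_of_highest hb; omega⟩⟩

lemma weight_zero_snoc_true (b : Fin n → Bool) :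
    weight 0 (Fin.snoc b true : Fin (n + 1) → Bool) = 0 := by
  simp [weight, card_snoc_eq]

lemma weight_succ_snoc_true {M : ℕ} (hM : 2 * (M + 1) ≤ n + 2) (b : Fin (n + 1) → Bool) :
    weight (M + 1) (Fin.snoc b true : Fin (n + 2) → Bool) =
      (if b (Fin.last n) = false then q ^ (n + 1) else 1) * weight M b := by
  unfold weight
  have hcard :
      #{i | (Fin.snoc b true : Fin (n + 2) → Bool) i = true} = #{i | b i = true} + 1 := by
    simp [card_snoc_eq]
  have hcond : (#{i | b i = true} + 1 = M + 1 ∧ Highest b ∧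
      2 * (#{i | b i = true} + 1) ≤ n + 1 + 1) ↔ (#{i | b i = true} = M ∧ Highest b) :=
    ⟨fun h => ⟨by omega, h.2.1⟩, fun ⟨h, hb⟩ => ⟨by omega, hb, by omega⟩⟩
  simp only [highest_snoc_iff, hcard, En_snoc, hcond]
  by_cases h : #{i | b i = true} = M ∧ Highest b
  · rw [if_pos h, if_pos h]
    cases b (Fin.last n) <;> simp [pow_add, mul_comm]
  · rw [if_neg h, if_neg h, mul_zero]

end Weight

lemma highestGF_succ (n M : ℕ) :
    highestGF (n + 1) M = highestGF n M + ∑ b : Fin n → Bool, weight M (Fin.snoc b true) := by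
  simp only [highestGF, sum_pi_fin_succ_bool, weight_snoc_false, add_comm]

lemma highestGF_zero_right (n : ℕ) : highestGF n 0 = 1 := by
  induction n with
  | zero => simp [highestGF, weight, Highest, En]
  | succ n ih => simp [highestGF_succ, weight_zero_snoc_true, ih]

lemma highestGF_eq_zero_of_lt {L M : ℕ} (h : L < 2 * M) : highestGF L M = 0 :=
  sum_eq_zero fun b _ => if_neg fun ⟨hM, hb⟩ => by
    have := two_mul_card_le_of_highest hb
    omega

lemma highestGF_recurrence {n M : ℕ} (h : 2 * (M + 1) ≤ n + 2) :
    highestGF (n + 2) (M + 1) = highestGF (n + 1) (M + 1) + highestGF (n + 1) M - highestGF n M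
      + q ^ (n + 1) * highestGF n M := by
  have hend : ∑ b : Fin (n + 1) → Bool, weight (M + 1) (Fin.snoc b true) =
      (highestGF (n + 1) M - highestGF n M) + q ^ (n + 1) * highestGF n M := by
    simp only [weight_succ_snoc_true h, sum_pi_fin_succ_bool, Fin.snoc_last, weight_snoc_false,
      Bool.true_eq_false, if_false, if_true, one_mul, ← mul_sum]
    rw [highestGF_succ n M, highestGF, add_sub_cancel_left]
  rw [highestGF_succ, hend]
  ring

theorem highestGF_eq_qBallot {n M : ℕ} (h : 2 * M ≤ n + 1) : highestGF n M = qBallot n M := by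
  induction n using Nat.strong_induction_on generalizing M with
  | _ n ih =>
  rcases M with _ | k
  · rw [highestGF_zero_right, qBallot_zero_right]
  obtain hboundary | hinterior := eq_or_lt_of_le h
  · obtain ⟨rfl⟩ : n = 2 * k + 1 := by omega
    rw [highestGF_eq_zero_of_lt (by omega), qBallot_two_mul_add_one]
  obtain ⟨c, rfl⟩ : ∃ c, n = k + c + 2 := ⟨n - k - 2, by omega⟩
  rw [highestGF_recurrence (by omega), ih _ (by omega) (by omega), ih _ (by omega) (by omega),
    ih _ (by omega) (by omega), qBallot_recurrence]

theorem stmt1 (L M : ℕ) (hML : 2 * M ≤ L) :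
    ∑ b ∈ (Finset.univ : Finset (Fin L → Bool)).filter
        (fun b => (Finset.univ.filter (fun i => b i = true)).card = M ∧ Highest b),
      q ^ En b = qb L M - (if M = 0 then 0 else qb L (M - 1)) := by
  rw [sum_filter]
  exact highestGF_eq_qBallot (by omega)
end

section
/- Base case of the periodic fermionic sum (s = 1): For positive integers l, m and a nonnegative integer p, the sum of q^{x_1 + ... + x_m} over all integer tuples satisfying 0 ≤ x_1 ≤ ... ≤ x_m ≤ p + min(x_1, l−1) equals ([p + m·l]_q / [m]_q) · [p+m−1 choose m−1]_q, where [n]_q = (1−q^n)/(1−q). -/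
/-!
Split the tuples according to whether `x₁ ≥ l - 1`. If so, the constraint on `x_m` is vacuous, and
subtracting `l - 1` from every entry leaves an arbitrary weakly increasing `m`-tuple in `[0, p]`;
such tuples have generating function `[p + m choose m]_q`, by the `q`-Pascal rule. If `x₁ = j < l - 1`,
the other entries range over `[j, p + j]` and contribute `q^(m j) [p + m - 1 choose m - 1]_q`.
Summing the geometric series in `q^m` gives the closed form.
-/

open Finset

lemma Fin.monotone_cons_of_le {α : Type*} [Preorder α] {m : ℕ} {a : α} {y : Fin m → α}
    (hy : Monotone y) (ha : ∀ i, a ≤ y i) : Monotone (Fin.cons a y : Fin (m + 1) → α) := by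
  intro i j hij
  induction j using Fin.cases with
  | zero => rw [Fin.le_zero_iff.mp hij]
  | succ j =>
    induction i using Fin.cases with
    | zero => simpa using ha j
    | succ i => simpa using hy (Fin.succ_le_succ_iff.mp hij)

def monoSeqs (m a b : ℕ) : Finset (Fin m → ℕ) :=
  (Fintype.piFinset fun _ => Icc a b).filter Monotone

lemma mem_monoSeqs {m a b : ℕ} {x : Fin m → ℕ} :
    x ∈ monoSeqs m a b ↔ Monotone x ∧ ∀ i, a ≤ x i ∧ x i ≤ b := by
  simp [monoSeqs, and_comm]

lemma mem_monoSeqs_succ {m a b : ℕ} {x : Fin (m + 1) → ℕ} :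
    x ∈ monoSeqs (m + 1) a b ↔ Monotone x ∧ a ≤ x 0 ∧ x (Fin.last m) ≤ b := by
  rw [mem_monoSeqs]
  refine ⟨fun ⟨hx, h⟩ => ⟨hx, (h 0).1, (h _).2⟩, fun ⟨hx, h0, hlast⟩ => ⟨hx, fun i => ?_⟩⟩
  exact ⟨h0.trans (hx (Fin.zero_le i)), (hx (Fin.le_last i)).trans hlast⟩

lemma sum_filter_monotone_fin_eq {R : Type*} [AddCommMonoid R] (m N : ℕ)
    (P : (Fin m → ℕ) → Prop) [DecidablePred P] (f : (Fin m → ℕ) → R) :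
    ∑ x ∈ univ.filter (fun x : Fin m → Fin (N + 1) => Monotone x ∧ P (fun i => x i)),
        f (fun i => x i) =
      ∑ x ∈ (monoSeqs m 0 N).filter P, f x := by
  refine sum_bij' (fun x _ i => x i) (fun y hy i => ⟨y i, ?_⟩) ?_ ?_
    (fun _ _ => rfl) (fun _ _ => rfl) (fun _ _ => rfl)
  · exact Nat.lt_succ_of_le ((mem_monoSeqs.mp (mem_filter.mp hy).1).2 i).2
  · intro x hx
    simp only [mem_filter, mem_univ, true_and] at hx
    simp only [mem_filter, mem_monoSeqs, zero_le, true_and]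
    exact ⟨⟨hx.1, fun i => Nat.le_of_lt_succ (x i).isLt⟩, hx.2⟩
  · intro y hy
    simp only [mem_filter, mem_monoSeqs] at hy
    simp only [mem_filter, mem_univ, true_and]
    exact ⟨hy.1.1, hy.2⟩

section MonoSeqSum

variable {R : Type*} [CommSemiring R] (r : R)

def monoSeqSum (m a b : ℕ) : R := ∑ x ∈ monoSeqs m a b, r ^ ∑ i, x i

lemma monoSeqSum_zero_left (a b : ℕ) : monoSeqSum r 0 a b = 1 := by
  have : monoSeqs 0 a b = {Fin.elim0} := by
    ext x
    simp [mem_monoSeqs, Subsingleton.elim x Fin.elim0, Subsingleton.monotone]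
  simp [monoSeqSum, this]

lemma monoSeqSum_zero_right (m : ℕ) : monoSeqSum r m 0 0 = 1 := by
  have : monoSeqs m 0 0 = {0} := by
    ext x
    simp only [mem_monoSeqs, nonpos_iff_eq_zero, zero_le, true_and, mem_singleton]
    exact ⟨fun h => funext h.2, fun h => h ▸ ⟨monotone_const, fun _ => rfl⟩⟩
  simp [monoSeqSum, this]

lemma monoSeqSum_shift (m b c : ℕ) :
    monoSeqSum r m c (b + c) = r ^ (m * c) * monoSeqSum r m 0 b := by
  rw [monoSeqSum, monoSeqSum, mul_sum]
  refine sum_nbij' (fun x i => x i - c) (fun y i => y i + c) ?_ ?_ ?_ ?_ ?_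
  · simp only [mem_monoSeqs]
    refine fun x ⟨hx, h⟩ => ⟨fun i j hij => Nat.sub_le_sub_right (hx hij) c, fun i => ?_⟩
    have := h i
    omega
  · simp only [mem_monoSeqs]
    refine fun y ⟨hy, h⟩ => ⟨fun i j hij => Nat.add_le_add_right (hy hij) c, fun i => ?_⟩
    have := h i
    omega
  · intro x hx
    funext i
    have := (mem_monoSeqs.mp hx).2 i
    simp only
    omega
  · intro y _
    simp
  · intro x hx
    have hsum : ∑ i, x i = ∑ i, (x i - c) + m * c := calc
      ∑ i, x i = ∑ i, ((x i - c) + c) :=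
        sum_congr rfl fun i _ => by have := (mem_monoSeqs.mp hx).2 i; omega
      _ = ∑ i, (x i - c) + m * c := by simp [sum_add_distrib]
    rw [hsum, pow_add, mul_comm]

lemma sum_monoSeqs_filter_head_eq {m a b : ℕ} (hab : a ≤ b) :
    ∑ x ∈ (monoSeqs (m + 1) a b).filter (fun x => x 0 = a), r ^ ∑ i, x i =
      r ^ a * monoSeqSum r m a b := by
  rw [monoSeqSum, mul_sum]
  refine sum_nbij' Fin.tail (fun y => Fin.cons a y) ?_ ?_ ?_ ?_ ?_
  · simp only [mem_filter, mem_monoSeqs]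
    exact fun x ⟨⟨hx, h⟩, _⟩ => ⟨hx.comp (Fin.strictMono_succ.monotone), fun i => h i.succ⟩
  · simp only [mem_filter, mem_monoSeqs]
    refine fun y ⟨hy, h⟩ => ⟨⟨Fin.monotone_cons_of_le hy fun i => (h i).1, fun i => ?_⟩, rfl⟩
    induction i using Fin.cases with
    | zero => exact ⟨le_rfl, hab⟩
    | succ i => exact h i
  · intro x hx
    rw [← (mem_filter.mp hx).2, Fin.cons_self_tail]
  · intro y _
    exact Fin.tail_cons _ _
  · intro x hx
    rw [Fin.sum_univ_succ, (mem_filter.mp hx).2, pow_add]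
    rfl

lemma filter_monoSeqs_le_head {m a b c : ℕ} (hac : a ≤ c) :
    (monoSeqs (m + 1) a b).filter (fun x => c ≤ x 0) = monoSeqs (m + 1) c b := by
  ext x
  simp only [mem_filter, mem_monoSeqs_succ]
  constructor
  · exact fun ⟨⟨hx, _, hb⟩, hc⟩ => ⟨hx, hc, hb⟩
  · exact fun ⟨hx, hc, hb⟩ => ⟨⟨hx, hac.trans hc, hb⟩, hc⟩

lemma monoSeqSum_succ_succ (m N : ℕ) :
    monoSeqSum r (m + 1) 0 (N + 1) =
      monoSeqSum r m 0 (N + 1) + r ^ (m + 1) * monoSeqSum r (m + 1) 0 N := by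
  rw [monoSeqSum, ← sum_filter_add_sum_filter_not _ (fun x => x 0 = 0),
    sum_monoSeqs_filter_head_eq r (Nat.zero_le _), pow_zero, one_mul]
  congr 1
  simp_rw [← Nat.one_le_iff_ne_zero]
  rw [filter_monoSeqs_le_head zero_le_one, ← monoSeqSum, monoSeqSum_shift r (m + 1) N 1, mul_one]

-- `m + 1` and `l` play the roles of the paper's `m` and `l - 1`.
lemma sum_fermionic_eq (m p l : ℕ) :
    ∑ x ∈ (monoSeqs (m + 1) 0 (p + l)).filter (fun x => x (Fin.last m) ≤ p + min (x 0) l),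
        r ^ ∑ i, x i =
      r ^ ((m + 1) * l) * monoSeqSum r (m + 1) 0 p +
        (∑ j ∈ range l, (r ^ (m + 1)) ^ j) * monoSeqSum r m 0 p := by
  rw [← sum_filter_add_sum_filter_not _ (fun x => l ≤ x 0), filter_filter, filter_filter]
  congr 1
  · have hset : (monoSeqs (m + 1) 0 (p + l)).filter
        (fun x => x (Fin.last m) ≤ p + min (x 0) l ∧ l ≤ x 0) = monoSeqs (m + 1) l (p + l) := by
      ext x
      simp only [mem_filter, mem_monoSeqs_succ]
      grind
    rw [hset, ← monoSeqSum, monoSeqSum_shift]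
  · rw [sum_mul, ← sum_fiberwise_of_maps_to (g := fun x => x 0) (t := range l)
      fun x hx => mem_range.mpr (not_le.mp (mem_filter.mp hx).2.2)]
    refine sum_congr rfl fun j hj => ?_
    have hset : ((monoSeqs (m + 1) 0 (p + l)).filter
        (fun x => x (Fin.last m) ≤ p + min (x 0) l ∧ ¬ l ≤ x 0)).filter (fun x => x 0 = j) =
        (monoSeqs (m + 1) j (p + j)).filter (fun x => x 0 = j) := by
      ext x
      simp only [mem_filter, mem_monoSeqs_succ]
      grind
    rw [hset, sum_monoSeqs_filter_head_eq r (Nat.le_add_left j p), monoSeqSum_shift, ← pow_mul]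
    ring

end MonoSeqSum

lemma one_sub_q_pow_ne_zero {k : ℕ} (hk : 0 < k) : 1 - q ^ k ≠ 0 := by
  have hpoly : (1 - Polynomial.X ^ k : Polynomial ℚ) ≠ 0 := fun h => by
    simpa [hk.ne'] using congrArg (Polynomial.eval 0) h
  simpa [q] using (RatFunc.algebraMap_ne_zero hpoly)

lemma qInt_eq (n : ℕ) : qInt n = (1 - q ^ n) / (1 - q) := by
  rw [eq_div_iff (by simpa using one_sub_q_pow_ne_zero one_pos), qInt]
  linear_combination -(geom_sum_mul q n)

lemma qb_zero_right (n : ℕ) : qb n 0 = 1 := by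
  simp [qb, qPoch_zero, qPoch_ne_zero]

lemma qb_self (n : ℕ) : qb n n = 1 := by
  simp [qb, qPoch_zero, qPoch_ne_zero]

lemma qb_succ_succ (n k : ℕ) :
    qb (n + k + 1) (k + 1) = qb (n + k) k * (1 - q ^ (n + k + 1)) / (1 - q ^ (k + 1)) := by
  rw [qb, qb, Nat.add_sub_cancel, show n + k + 1 - (k + 1) = n by omega, qPoch_succ, qPoch_succ]
  field_simp [qPoch_ne_zero, one_sub_q_pow_ne_zero k.succ_pos]

lemma qb_pascal (n k : ℕ) :
    qb (n + 1 + (k + 1)) (k + 1) = qb (n + 1 + k) k + q ^ (k + 1) * qb (n + (k + 1)) (k + 1) := by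
  simp only [qb, Nat.add_sub_cancel]
  rw [show n + 1 + (k + 1) = n + k + 1 + 1 by ring, show n + 1 + k = n + k + 1 by ring,
    show n + (k + 1) = n + k + 1 by ring, qPoch_succ (n + k + 1), qPoch_succ k, qPoch_succ n]
  field_simp [qPoch_ne_zero, one_sub_q_pow_ne_zero k.succ_pos, one_sub_q_pow_ne_zero n.succ_pos]
  ring

lemma monoSeqSum_q_eq_qb (m N : ℕ) : monoSeqSum q m 0 N = qb (N + m) m := by
  induction m generalizing N with
  | zero => rw [monoSeqSum_zero_left, add_zero, qb_zero_right]
  | succ m ih =>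
    induction N with
    | zero => rw [monoSeqSum_zero_right, zero_add, qb_self]
    | succ N ihN => rw [monoSeqSum_succ_succ, ih, ihN, qb_pascal]

lemma fermionic_closed_form (m p l : ℕ) :
    q ^ ((m + 1) * l) * qb (p + (m + 1)) (m + 1) + (∑ j ∈ range l, (q ^ (m + 1)) ^ j) * qb (p + m) m =
      qInt (p + (m + 1) * (l + 1)) / qInt (m + 1) * qb (p + m) m := by
  have hQ := one_sub_q_pow_ne_zero (k := m + 1) m.succ_pos
  have hgeom : ∑ j ∈ range l, (q ^ (m + 1)) ^ j = (1 - (q ^ (m + 1)) ^ l) / (1 - q ^ (m + 1)) := by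
    rw [eq_div_iff hQ]
    linear_combination -(geom_sum_mul (q ^ (m + 1)) l)
  have hq : (1 : RatFunc ℚ) - q ≠ 0 := by simpa using one_sub_q_pow_ne_zero one_pos
  rw [← add_assoc, qb_succ_succ, hgeom, qInt_eq, qInt_eq, div_div_div_cancel_right₀ hq]
  rw [show p + (m + 1) * (l + 1) = (m + 1) * l + (p + m + 1) by ring, pow_add, pow_mul]
  field_simp
  ring

theorem stmt7 (l m p : ℕ) (hl : 0 < l) (hm : 0 < m) :
    ∑ x ∈ (Finset.univ : Finset (Fin m → Fin (p + l))).filter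
        (fun x => Monotone x ∧
          (x ⟨m - 1, by omega⟩).val ≤ p + min (x ⟨0, hm⟩).val (l - 1)),
      q ^ (∑ i : Fin m, (x i : ℕ)) =
    qInt (p + m * l) / qInt m * qb (p + m - 1) (m - 1) := by
  obtain ⟨l, rfl⟩ := Nat.exists_eq_add_one_of_ne_zero hl.ne'
  obtain ⟨m, rfl⟩ := Nat.exists_eq_add_one_of_ne_zero hm.ne'
  refine (sum_filter_monotone_fin_eq (m + 1) (p + l)
    (fun y => y (Fin.last m) ≤ p + min (y 0) l) (fun y => q ^ ∑ i, y i)).trans ?_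
  rw [sum_fermionic_eq, monoSeqSum_q_eq_qb, monoSeqSum_q_eq_qb, fermionic_closed_form]
  rfl
end
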